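/- For each s ∈ {1,…,n} and each i ∈ {0,…,s−1}, one has P_s^*(α) = P_s(i,α) for every α ∈ R_s^i. -/

import Mathlib

open scoped Classical

/-- `h_s(y; z_{1:s})` (0-indexed: coordinates `0,…,s−1` of `y`,`z`,`l`,`u` play the role of
the paper's coordinates `1,…,s`): the objective of the fused ℓ₀ proximal subproblem
`(1/2)Σ_{j<s}(y_j−z_j)² + λ₁ Σ_{j<s−1}|y_j−y_{j+1}|₀ + Σ_{j<s} ω_j(y_j)`,
with value `⊤` outside the box constraints. -/
noncomputable def hfun (lam1 lam2 : ℝ) (l u z : ℕ → ℝ) (s : ℕ) (y : ℕ → ℝ) : EReal :=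
  if ∀ j ∈ Finset.range s, l j ≤ y j ∧ y j ≤ u j then
    ((((1 : ℝ) / 2) * ∑ j ∈ Finset.range s, (y j - z j) ^ 2
      + lam1 * ∑ j ∈ Finset.range (s - 1), (if y j = y (j + 1) then (0 : ℝ) else 1)
      + lam2 * ∑ j ∈ Finset.range s, (if y j = 0 then (0 : ℝ) else 1) : ℝ) : EReal)
  else ⊤

/-- `H(0) = −λ₁` and, for `s ≥ 1`, `H(s) = min_{y ∈ ℝˢ} h_s(y; z_{1:s})`
(the minimum is attained; it equals the infimum). -/
noncomputable def Hfun (lam1 lam2 : ℝ) (l u z : ℕ → ℝ) : ℕ → EReal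
  | 0 => ((-lam1 : ℝ) : EReal)
  | s + 1 => ⨅ y : ℕ → ℝ, hfun lam1 lam2 l u z (s + 1) y

/-- `P_s(i,α) = H(i) + (1/2)Σ_{j=i+1}^{s}(α−z_j)² + Σ_{j=i+1}^{s} ω_j(α) + λ₁`
(0-indexed: the sums run over `j ∈ [i, s)`). -/
noncomputable def Pfun (lam1 lam2 : ℝ) (l u z : ℕ → ℝ) (s i : ℕ) (α : ℝ) : EReal :=
  Hfun lam1 lam2 l u z i +
    (if ∀ j ∈ Finset.Ico i s, l j ≤ α ∧ α ≤ u j then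
      ((((1 : ℝ) / 2) * ∑ j ∈ Finset.Ico i s, (α - z j) ^ 2
        + lam2 * ((s - i : ℕ) : ℝ) * (if α = 0 then (0 : ℝ) else 1) + lam1 : ℝ) : EReal)
    else ⊤)

/-- `P_s^*(α) = min_{i ∈ {0,…,s−1}} P_s(i,α)`. -/
noncomputable def Pstar (lam1 lam2 : ℝ) (l u z : ℕ → ℝ) (s : ℕ) (α : ℝ) : EReal :=
  ⨅ i ∈ Finset.range s, Pfun lam1 lam2 l u z s i α
/-- The sets `R_s^i`: `R₁⁰ = ℝ`; for `s ≥ 2`,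
`R_s^{s−1} = {α : P_{s−1}^*(α) ≥ min_{α′} P_{s−1}^*(α′) + λ₁}` and
`R_s^i = R_{s−1}^i ∩ (R_s^{s−1})ᶜ` for `i ∈ {0,…,s−2}`.
(Values for the out-of-range indices `s = 0` and `s = 1, i ≥ 1` are junk.) -/
noncomputable def Rset (lam1 lam2 : ℝ) (l u z : ℕ → ℝ) : ℕ → ℕ → Set ℝ
  | 0, _ => ∅
  | 1, i => if i = 0 then Set.univ else ∅
  | s + 2, i =>
    if i = s + 1 then
      {α : ℝ | (⨅ α' : ℝ, Pstar lam1 lam2 l u z (s + 1) α') + ((lam1 : ℝ) : EReal)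
        ≤ Pstar lam1 lam2 l u z (s + 1) α}
    else
      Rset lam1 lam2 l u z (s + 1) i ∩
        {α : ℝ | (⨅ α' : ℝ, Pstar lam1 lam2 l u z (s + 1) α') + ((lam1 : ℝ) : EReal)
          ≤ Pstar lam1 lam2 l u z (s + 1) α}ᶜ

/-!
Fixing the last coordinate `y_s = α` and splitting `h_{s+1}` into `h_s` plus the cost of the new
coordinate shows that `min {h_s y | y_s = α} = P_s^*(α)`; hence `H(s) = min_α P_s^*(α)` and
`P_{s+1}^*(α) = min (P_s^*(α), H(s) + λ₁) + ½(α − z_{s+1})² + ω_{s+1}(α)`.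
On `R_{s+1}^s` the second argument of the `min` is the smaller one and outside it the first, so
the identity `P^* = P(i, ·)` on `R^i` propagates from `s` to `s + 1`.
-/

namespace EReal

theorem iInf_add_coe {ι : Sort*} (f : ι → EReal) (c : ℝ) :
    ⨅ x, (f x + c) = (⨅ x, f x) + c := by
  have hc {a b : EReal} : a - c ≤ b ↔ a ≤ b + c :=
    sub_le_iff_le_add (.inl (coe_ne_bot c)) (.inl (coe_ne_top c))
  refine le_antisymm (hc.1 (le_iInf fun x => hc.2 (iInf_le _ x))) ?_
  exact le_iInf fun x => add_le_add_left (iInf_le f x) _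

theorem iInf_add_of_nonneg {ι : Sort*} {f : ι → EReal} (hf : ∀ x, 0 ≤ f x) {c : EReal}
    (hc : c ≠ ⊥) : ⨅ x, (f x + c) = (⨅ x, f x) + c := by
  induction c using EReal.rec with
  | bot => exact absurd rfl hc
  | top =>
    have hne {a : EReal} (ha : 0 ≤ a) : a ≠ ⊥ := ne_bot_of_le_ne_bot zero_ne_bot ha
    simp only [add_top_of_ne_bot (hne (hf _)), add_top_of_ne_bot (hne (le_iInf hf)), iInf_top]
  | coe c => exact iInf_add_coe f c

theorem biInf_add_of_nonneg {ι : Sort*} {p : ι → Prop} {f : ι → EReal} (hf : ∀ x, 0 ≤ f x)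
    {c : EReal} (hc : c ≠ ⊥) : ⨅ (x) (_ : p x), (f x + c) = (⨅ (x) (_ : p x), f x) + c := by
  simp only [iInf_add_of_nonneg (fun _ => hf _) hc]
  exact iInf_add_of_nonneg (fun x => le_iInf fun _ => hf x) hc

theorem iInf_add_ite_eq_min {ι : Type*} (f : ι → EReal) (a : ι) {c : ℝ} (hc : 0 ≤ c) :
    ⨅ b, (f b + ((if b = a then 0 else c : ℝ) : EReal)) = min (f a) ((⨅ b, f b) + c) := by
  refine le_antisymm (le_min ?_ ?_) (le_iInf fun b => ?_)
  · simpa using iInf_le (fun b => f b + ((if b = a then 0 else c : ℝ) : EReal)) a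
  · rw [← iInf_add_coe]
    refine iInf_mono fun b => add_le_add_right (EReal.coe_le_coe_iff.2 ?_) _
    split_ifs <;> simp [hc]
  · split_ifs with hb
    · simp [hb]
    · exact (min_le_right _ _).trans (add_le_add_left (iInf_le f b) _)

theorem coe_add_ite_top (p : Prop) [Decidable p] (a b : ℝ) :
    (a : EReal) + (if p then (b : EReal) else ⊤) = if p then ((a + b : ℝ) : EReal) else ⊤ := by
  split_ifs <;> simp [add_top_of_ne_bot]

theorem ite_top_add_ite_top (p q : Prop) [Decidable p] [Decidable q] (a b : ℝ) :
    ((if p then (a : EReal) else ⊤) + if q then (b : EReal) else ⊤)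
      = if p ∧ q then ((a + b : ℝ) : EReal) else ⊤ := by
  split_ifs <;> simp_all [add_top_of_ne_bot]

end EReal

/-- `½(α − z_j)² + ω_j(α)` -/
noncomputable def stepCost (lam2 : ℝ) (l u z : ℕ → ℝ) (j : ℕ) (α : ℝ) : EReal :=
  if l j ≤ α ∧ α ≤ u j then
    (((1 : ℝ) / 2 * (α - z j) ^ 2 + lam2 * (if α = 0 then (0 : ℝ) else 1) : ℝ) : EReal)
  else ⊤

section Recursion

variable {lam1 lam2 : ℝ} {l u z : ℕ → ℝ}

theorem stepCost_ne_bot (j : ℕ) (α : ℝ) : stepCost lam2 l u z j α ≠ ⊥ := by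
  unfold stepCost
  split
  exacts [EReal.coe_ne_bot _, top_ne_bot]

theorem hfun_nonneg (h1 : 0 ≤ lam1) (h2 : 0 ≤ lam2) (s : ℕ) (y : ℕ → ℝ) :
    0 ≤ hfun lam1 lam2 l u z s y := by
  unfold hfun
  split
  · exact EReal.coe_nonneg.2 (by positivity)
  · exact le_top

theorem neg_le_Hfun (h1 : 0 ≤ lam1) (h2 : 0 ≤ lam2) (s : ℕ) :
    ((-lam1 : ℝ) : EReal) ≤ Hfun lam1 lam2 l u z s := by
  cases s with
  | zero => exact le_rfl
  | succ s =>
    exact (EReal.coe_nonpos.2 (neg_nonpos.2 h1)).trans (le_iInf (hfun_nonneg h1 h2 (s + 1)))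

theorem Pfun_nonneg (h1 : 0 ≤ lam1) (h2 : 0 ≤ lam2) (s i : ℕ) (α : ℝ) :
    0 ≤ Pfun lam1 lam2 l u z s i α := by
  have hH := neg_le_Hfun (l := l) (u := u) (z := z) h1 h2 i
  unfold Pfun
  split
  · calc (0 : EReal) = ((-lam1 : ℝ) : EReal) + ((lam1 : ℝ) : EReal) := by
          rw [← EReal.coe_add, neg_add_cancel, EReal.coe_zero]
      _ ≤ _ := add_le_add hH (EReal.coe_le_coe_iff.2 (le_add_of_nonneg_left (by positivity)))
  · rw [EReal.add_top_of_ne_bot (ne_bot_of_le_ne_bot (EReal.coe_ne_bot _) hH)]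
    exact le_top

theorem Pstar_nonneg (h1 : 0 ≤ lam1) (h2 : 0 ≤ lam2) (s : ℕ) (α : ℝ) :
    0 ≤ Pstar lam1 lam2 l u z s α :=
  le_iInf₂ fun i _ => Pfun_nonneg h1 h2 s i α

theorem Pfun_succ {i s : ℕ} (his : i ≤ s) (α : ℝ) :
    Pfun lam1 lam2 l u z (s + 1) i α = Pfun lam1 lam2 l u z s i α + stepCost lam2 l u z s α := by
  rw [Pfun, Pfun, stepCost, add_assoc (Hfun lam1 lam2 l u z i), EReal.ite_top_add_ite_top]
  congr 1
  refine if_congr ?_ (congrArg _ ?_) rfl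
  · rw [← Nat.succ_eq_add_one, Nat.Ico_succ_right_eq_insert_Ico his, Finset.forall_mem_insert,
      and_comm]
  · rw [Finset.sum_Ico_succ_top his, Nat.succ_sub his]
    push_cast
    ring

theorem Pfun_self_succ (s : ℕ) (α : ℝ) :
    Pfun lam1 lam2 l u z (s + 1) s α
      = Hfun lam1 lam2 l u z s + ((lam1 : ℝ) + stepCost lam2 l u z s α) := by
  rw [Pfun, stepCost, EReal.coe_add_ite_top]
  congr 1
  refine if_congr (by simp) (congrArg _ ?_) rfl
  simp only [Nat.Ico_succ_singleton, Finset.sum_singleton, Nat.add_sub_cancel_left]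
  push_cast
  ring

theorem Pstar_one (α : ℝ) : Pstar lam1 lam2 l u z 1 α = Pfun lam1 lam2 l u z 1 0 α := by
  simp [Pstar]

theorem Pstar_succ (h1 : 0 ≤ lam1) (h2 : 0 ≤ lam2) (s : ℕ) (α : ℝ) :
    Pstar lam1 lam2 l u z (s + 1) α
      = min (Pstar lam1 lam2 l u z s α) (Hfun lam1 lam2 l u z s + lam1)
          + stepCost lam2 l u z s α := by
  have hprefix : ⨅ i ∈ Finset.range s, Pfun lam1 lam2 l u z (s + 1) i α
      = Pstar lam1 lam2 l u z s α + stepCost lam2 l u z s α := by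
    simp_rw [Pstar, ← EReal.biInf_add_of_nonneg (Pfun_nonneg h1 h2 s · α) (stepCost_ne_bot s α)]
    exact iInf_congr fun i => iInf_congr fun hi => Pfun_succ (Finset.mem_range.1 hi).le α
  rw [Pstar, Finset.range_add_one, Finset.iInf_insert, hprefix, Pfun_self_succ, ← add_assoc,
    min_add_add_right, min_comm]

theorem Pstar_one_eq_stepCost (h1 : 0 ≤ lam1) (h2 : 0 ≤ lam2) (α : ℝ) :
    Pstar lam1 lam2 l u z 1 α = stepCost lam2 l u z 0 α := by
  rw [Pstar_succ h1 h2, Hfun, ← EReal.coe_add, neg_add_cancel]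
  simp [Pstar]

theorem hfun_one (y : ℕ → ℝ) : hfun lam1 lam2 l u z 1 y = stepCost lam2 l u z 0 (y 0) := by
  simp [hfun, stepCost]

theorem hfun_succ (k : ℕ) (y : ℕ → ℝ) :
    hfun lam1 lam2 l u z (k + 2) y = hfun lam1 lam2 l u z (k + 1) y
      + (((if y k = y (k + 1) then 0 else lam1 : ℝ) : EReal)
        + stepCost lam2 l u z (k + 1) (y (k + 1))) := by
  rw [hfun, hfun, stepCost, EReal.coe_add_ite_top, EReal.ite_top_add_ite_top]
  refine if_congr ?_ (congrArg _ ?_) rfl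
  · rw [Finset.range_add_one, Finset.forall_mem_insert, and_comm]
  · rw [show k + 2 - 1 = k + 1 from rfl, Nat.add_sub_cancel]
    simp only [Finset.sum_range_succ]
    split_ifs <;> ring

theorem hfun_congr {s : ℕ} {y y' : ℕ → ℝ} (h : ∀ j < s, y j = y' j) :
    hfun lam1 lam2 l u z s y = hfun lam1 lam2 l u z s y' := by
  have hs : ∀ j ∈ Finset.range s, y j = y' j := fun j hj => h j (Finset.mem_range.1 hj)
  have hs' : ∀ j ∈ Finset.range (s - 1), y j = y' j ∧ y (j + 1) = y' (j + 1) := fun j hj =>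
    ⟨h j (by simp at hj; omega), h (j + 1) (by simp at hj; omega)⟩
  simp +contextual only [hfun, hs, hs']

theorem Hfun_succ_eq_iInf_iInf_hfun (k : ℕ) :
    Hfun lam1 lam2 l u z (k + 1)
      = ⨅ (β : ℝ) (y : ℕ → ℝ) (_ : y k = β), hfun lam1 lam2 l u z (k + 1) y :=
  le_antisymm (le_iInf₂ fun _ y => le_iInf fun _ => iInf_le _ y)
    (le_iInf fun y => iInf_le_of_le (y k) (iInf_le_of_le y (iInf_le _ rfl)))

theorem iInf_hfun_last_eq_Pstar (h1 : 0 ≤ lam1) (h2 : 0 ≤ lam2) (k : ℕ) (α : ℝ) :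
    ⨅ (y : ℕ → ℝ) (_ : y k = α), hfun lam1 lam2 l u z (k + 1) y
      = Pstar lam1 lam2 l u z (k + 1) α := by
  induction k generalizing α with
  | zero =>
    simp only [zero_add, hfun_one, Pstar_one_eq_stepCost h1 h2]
    exact le_antisymm (iInf_le_of_le (fun _ => α) (iInf_le _ rfl)) (le_iInf₂ fun y hy => by rw [hy])
  | succ k ih =>
    show ⨅ (y : ℕ → ℝ) (_ : y (k + 1) = α), hfun lam1 lam2 l u z (k + 2) y
      = Pstar lam1 lam2 l u z (k + 2) α
    have hrec : Pstar lam1 lam2 l u z (k + 2) α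
        = (⨅ β, (Pstar lam1 lam2 l u z (k + 1) β + ((if β = α then 0 else lam1 : ℝ) : EReal)))
          + stepCost lam2 l u z (k + 1) α := by
      rw [Pstar_succ h1 h2, EReal.iInf_add_ite_eq_min _ _ h1, Hfun_succ_eq_iInf_iInf_hfun]
      simp only [ih]
    rw [hrec]
    refine le_antisymm ?_ (le_iInf₂ fun y hy => ?_)
    · rw [← EReal.iInf_add_of_nonneg
        (fun β => add_nonneg (Pstar_nonneg h1 h2 _ β) (EReal.coe_nonneg.2 (by positivity)))
        (stepCost_ne_bot _ α)]
      refine le_iInf fun β => ?_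
      rw [← ih β, add_assoc, ← EReal.biInf_add_of_nonneg (hfun_nonneg h1 h2 (k + 1))
        (EReal.add_ne_bot_iff.2 ⟨EReal.coe_ne_bot _, stepCost_ne_bot _ α⟩)]
      refine le_iInf₂ fun y hy => iInf₂_le_of_le (Function.update y (k + 1) α)
        (Function.update_self _ _ _) ?_
      rw [hfun_succ, Function.update_self, Function.update_of_ne (by omega), hy,
        hfun_congr fun j hj => Function.update_of_ne (by omega) _ _]
    · calc (⨅ β, (Pstar lam1 lam2 l u z (k + 1) β + ((if β = α then 0 else lam1 : ℝ) : EReal)))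
            + stepCost lam2 l u z (k + 1) α
          ≤ (Pstar lam1 lam2 l u z (k + 1) (y k) + ((if y k = α then 0 else lam1 : ℝ) : EReal))
            + stepCost lam2 l u z (k + 1) α := add_le_add_left (iInf_le _ (y k)) _
        _ ≤ (hfun lam1 lam2 l u z (k + 1) y + ((if y k = α then 0 else lam1 : ℝ) : EReal))
            + stepCost lam2 l u z (k + 1) α := by
          gcongr
          exact (ih (y k)).symm.trans_le (iInf_le_of_le y (iInf_le _ rfl))
        _ = hfun lam1 lam2 l u z (k + 2) y := by rw [hfun_succ, hy, add_assoc]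

theorem Hfun_succ_eq_iInf_Pstar (h1 : 0 ≤ lam1) (h2 : 0 ≤ lam2) (k : ℕ) :
    Hfun lam1 lam2 l u z (k + 1) = ⨅ β, Pstar lam1 lam2 l u z (k + 1) β := by
  simp only [Hfun_succ_eq_iInf_iInf_hfun, iInf_hfun_last_eq_Pstar h1 h2]

end Recursion

section Regions

variable {lam1 lam2 : ℝ} {l u z : ℕ → ℝ}

theorem mem_Rset_add_two_self {s : ℕ} {α : ℝ} :
    α ∈ Rset lam1 lam2 l u z (s + 2) (s + 1)
      ↔ (⨅ β, Pstar lam1 lam2 l u z (s + 1) β) + lam1 ≤ Pstar lam1 lam2 l u z (s + 1) α := by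
  simp [Rset]

theorem mem_Rset_add_two_of_ne {s i : ℕ} (hi : i ≠ s + 1) {α : ℝ} :
    α ∈ Rset lam1 lam2 l u z (s + 2) i
      ↔ α ∈ Rset lam1 lam2 l u z (s + 1) i
        ∧ Pstar lam1 lam2 l u z (s + 1) α < (⨅ β, Pstar lam1 lam2 l u z (s + 1) β) + lam1 := by
  simp [Rset, hi]

theorem Pstar_eq_Pfun_of_mem_Rset (h1 : 0 ≤ lam1) (h2 : 0 ≤ lam2) {s i : ℕ} (hi : i < s + 1)
    {α : ℝ} (hα : α ∈ Rset lam1 lam2 l u z (s + 1) i) :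
    Pstar lam1 lam2 l u z (s + 1) α = Pfun lam1 lam2 l u z (s + 1) i α := by
  induction s generalizing i with
  | zero =>
    obtain rfl : i = 0 := by omega
    exact Pstar_one α
  | succ k ih =>
    rw [Pstar_succ h1 h2, Hfun_succ_eq_iInf_Pstar h1 h2]
    rcases Nat.lt_succ_iff_lt_or_eq.1 hi with hik | rfl
    · obtain ⟨hαk, hlt⟩ := (mem_Rset_add_two_of_ne hik.ne).1 hα
      rw [min_eq_left hlt.le, ih hik hαk, Pfun_succ hik.le]
    · rw [min_eq_right (mem_Rset_add_two_self.1 hα), Pfun_self_succ,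
        Hfun_succ_eq_iInf_Pstar h1 h2, add_assoc]

end Regions

theorem stmt7_general (lam1 lam2 : ℝ) (hlam1 : 0 < lam1) (hlam2 : 0 < lam2)
    (l u z : ℕ → ℝ)
    (s : ℕ) (i : ℕ) (hi : i < s)
    (α : ℝ) (hα : α ∈ Rset lam1 lam2 l u z s i) :
    Pstar lam1 lam2 l u z s α = Pfun lam1 lam2 l u z s i α := by
  obtain ⟨s, rfl⟩ := Nat.exists_eq_add_one_of_ne_zero (Nat.ne_zero_of_lt hi)
  exact Pstar_eq_Pfun_of_mem_Rset hlam1.le hlam2.le hi hα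

/-- for each `s ∈ {1,…,n}` and `i ∈ {0,…,s−1}`,
`P_s^*(α) = P_s(i,α)` for every `α ∈ R_s^i`. -/
theorem stmt7 (n : ℕ) (hn : 1 ≤ n) (lam1 lam2 : ℝ) (hlam1 : 0 < lam1) (hlam2 : 0 < lam2)
    (l u z : ℕ → ℝ) (hlu : ∀ i < n, l i ≤ 0 ∧ 0 ≤ u i)
    (s : ℕ) (hs1 : 1 ≤ s) (hsn : s ≤ n) (i : ℕ) (hi : i < s)
    (α : ℝ) (hα : α ∈ Rset lam1 lam2 l u z s i) :
    Pstar lam1 lam2 l u z s α = Pfun lam1 lam2 l u z s i α :=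
  stmt7_general lam1 lam2 hlam1 hlam2 l u z s i hi α hα
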